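/- Let A be a real n×n matrix, B a real n×p matrix, u : ℝ → ℝᵖ, and let ξ, ξ̃ : ℝ → ℝⁿ be differentiable functions satisfying ξ'(t) = Aξ(t) + Bu(t) and ξ̃'(t) = Aξ̃(t) + Bu(t) for all t. Let M be a real symmetric positive definite n×n matrix and μ ∈ ℝ with AᵀM + MA + μM ⪯ 0, and suppose (ξ(0) − ξ̃(0))ᵀ M (ξ(0) − ξ̃(0)) ≤ r for some r ≥ 0. Let a ∈ ℝⁿ and z > 0 satisfy z² a aᵀ ⪯ M. Let T > 0, γ ≥ 0, and let s : ℝ → ℝⁿ be any function such that (s(t) − ξ̃(t))ᵀ M (s(t) − ξ̃(t)) e^{μt} ≤ γ for all t ∈ [0, T]. Then for all t ∈ [0, T]: −(√γ + √r) e^{−μt/2} / z ≤ aᵀ(s(t) − ξ(t)) ≤ (√γ + √r) e^{−μt/2} / z. -/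

import Mathlib

/-!
The difference `ξ - η` of two nominal trajectories solves `x' = A x`, so the linear matrix
inequality makes `(ξ - η)ᵀ M (ξ - η) e^{μt}` nonincreasing, hence at most `r`. Since
`z² a aᵀ ⪯ M`, every `v` with `vᵀ M v e^{μt} ≤ c` satisfies `|aᵀ v| ≤ √c e^{-μt/2} / z`.
Applying this to `s - η` and to `ξ - η` and using the triangle inequality gives the bound.
-/

open Matrix

section

variable {ι : Type*} [Fintype ι]

section Derivatives

variable {f g : ℝ → ι → ℝ} {f' g' : ι → ℝ} {t : ℝ}

theorem HasDerivAt.dotProduct (hf : HasDerivAt f f' t) (hg : HasDerivAt g g' t) :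
    HasDerivAt (fun t => f t ⬝ᵥ g t) (f' ⬝ᵥ g t + f t ⬝ᵥ g') t := by
  unfold _root_.dotProduct
  simpa only [Finset.sum_add_distrib] using
    HasDerivAt.fun_sum fun i _ => (hasDerivAt_pi.1 hf i).fun_mul (hasDerivAt_pi.1 hg i)

theorem HasDerivAt.mulVec {κ : Type*} (M : Matrix κ ι ℝ) (hf : HasDerivAt f f' t) :
    HasDerivAt (fun t => M *ᵥ f t) (M *ᵥ f') t :=
  hasDerivAt_pi.2 fun i => by
    simpa [Matrix.mulVec] using (hasDerivAt_const t (M i)).dotProduct hf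

end Derivatives

theorem dotProduct_lyapunov_mulVec (A M : Matrix ι ι ℝ) (μ : ℝ) (v : ι → ℝ) :
    v ⬝ᵥ (Aᵀ * M + M * A + μ • M) *ᵥ v
      = A *ᵥ v ⬝ᵥ M *ᵥ v + v ⬝ᵥ M *ᵥ (A *ᵥ v) + μ * (v ⬝ᵥ M *ᵥ v) := by
  rw [add_mulVec, add_mulVec, dotProduct_add, dotProduct_add, smul_mulVec, dotProduct_smul,
    smul_eq_mul, ← mulVec_mulVec, ← mulVec_mulVec, dotProduct_mulVec v Aᵀ, vecMul_transpose]

theorem antitone_dotProduct_mulVec_mul_exp {A M : Matrix ι ι ℝ} {μ : ℝ}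
    (hLMI : ∀ v, v ⬝ᵥ (Aᵀ * M + M * A + μ • M) *ᵥ v ≤ 0) {g : ℝ → ι → ℝ}
    (hg : ∀ t, HasDerivAt g (A *ᵥ g t) t) :
    Antitone fun t => (g t ⬝ᵥ M *ᵥ g t) * Real.exp (μ * t) := by
  have hderiv : ∀ t, HasDerivAt (fun t => (g t ⬝ᵥ M *ᵥ g t) * Real.exp (μ * t))
      ((g t ⬝ᵥ (Aᵀ * M + M * A + μ • M) *ᵥ g t) * Real.exp (μ * t)) t := by
    intro t
    have hexp : HasDerivAt (fun t => Real.exp (μ * t)) (Real.exp (μ * t) * μ) t := by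
      simpa using ((hasDerivAt_id t).const_mul μ).exp
    refine (((hg t).dotProduct ((hg t).mulVec M)).mul hexp).congr_deriv ?_
    rw [dotProduct_lyapunov_mulVec]
    ring
  refine antitone_of_deriv_nonpos (fun t => (hderiv t).differentiableAt) fun t => ?_
  rw [(hderiv t).deriv]
  exact mul_nonpos_of_nonpos_of_nonneg (hLMI _) (Real.exp_nonneg _)

theorem sq_mul_sq_dotProduct_le {M : Matrix ι ι ℝ} {a : ι → ℝ} {z : ℝ}
    (hdom : ∀ v, 0 ≤ v ⬝ᵥ (M - z ^ 2 • vecMulVec a a) *ᵥ v) (v : ι → ℝ) :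
    z ^ 2 * (a ⬝ᵥ v) ^ 2 ≤ v ⬝ᵥ M *ᵥ v := by
  have h := hdom v
  rw [sub_mulVec, dotProduct_sub, smul_mulVec, dotProduct_smul, vecMulVec_mulVec,
    op_smul_eq_smul, dotProduct_smul, dotProduct_comm v a, smul_eq_mul, smul_eq_mul] at h
  linarith

theorem abs_dotProduct_le_of_dotProduct_mulVec_mul_exp_le {M : Matrix ι ι ℝ} {a : ι → ℝ}
    {z : ℝ} (hz : 0 < z) (hdom : ∀ v, 0 ≤ v ⬝ᵥ (M - z ^ 2 • vecMulVec a a) *ᵥ v)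
    {μ t c : ℝ} {v : ι → ℝ}
    (hv : (v ⬝ᵥ M *ᵥ v) * Real.exp (μ * t) ≤ c) :
    |a ⬝ᵥ v| ≤ Real.sqrt c * Real.exp (-μ * t / 2) / z := by
  have hq : v ⬝ᵥ M *ᵥ v ≤ c * Real.exp (-μ * t) := by
    rwa [neg_mul, Real.exp_neg, ← div_eq_mul_inv, le_div_iff₀ (Real.exp_pos _)]
  rw [le_div_iff₀ hz, Real.exp_half, ← Real.sqrt_mul' _ (Real.exp_nonneg _), mul_comm,
    ← Real.sqrt_sq (by positivity : 0 ≤ z * |a ⬝ᵥ v|)]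
  refine Real.sqrt_le_sqrt ((le_of_eq ?_).trans ((sq_mul_sq_dotProduct_le hdom v).trans hq))
  rw [mul_pow, sq_abs]

end

theorem stmt_8_general {n p : ℕ} (A : Matrix (Fin n) (Fin n) ℝ) (B : Matrix (Fin n) (Fin p) ℝ)
    (u : ℝ → Fin p → ℝ) (ξ η : ℝ → Fin n → ℝ)
    (hξ : ∀ t : ℝ, HasDerivAt ξ (A.mulVec (ξ t) + B.mulVec (u t)) t)
    (hη : ∀ t : ℝ, HasDerivAt η (A.mulVec (η t) + B.mulVec (u t)) t)
    (M : Matrix (Fin n) (Fin n) ℝ) (μ : ℝ)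
    (hLMI : ∀ v : Fin n → ℝ, v ⬝ᵥ (Aᵀ * M + M * A + μ • M).mulVec v ≤ 0)
    (r : ℝ)
    (h0 : (ξ 0 - η 0) ⬝ᵥ M.mulVec (ξ 0 - η 0) ≤ r)
    (a : Fin n → ℝ) (z : ℝ) (hz : 0 < z)
    (hdom : ∀ v : Fin n → ℝ, 0 ≤ v ⬝ᵥ (M - z ^ 2 • vecMulVec a a).mulVec v)
    (T : ℝ) (γ : ℝ)
    (s : ℝ → Fin n → ℝ)
    (hs : ∀ t ∈ Set.Icc (0 : ℝ) T,
      ((s t - η t) ⬝ᵥ M.mulVec (s t - η t)) * Real.exp (μ * t) ≤ γ) :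
    ∀ t ∈ Set.Icc (0 : ℝ) T,
      -((Real.sqrt γ + Real.sqrt r) * Real.exp (-μ * t / 2) / z) ≤ a ⬝ᵥ (s t - ξ t) ∧
        a ⬝ᵥ (s t - ξ t) ≤ (Real.sqrt γ + Real.sqrt r) * Real.exp (-μ * t / 2) / z := by
  intro t ht
  have hdiff : ∀ t, HasDerivAt (fun t => ξ t - η t) (A *ᵥ (ξ t - η t)) t := fun t => by
    simpa [mulVec_sub] using (hξ t).fun_sub (hη t)
  have hnominal : ((ξ t - η t) ⬝ᵥ M *ᵥ (ξ t - η t)) * Real.exp (μ * t) ≤ r := by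
    simpa using (antitone_dotProduct_mulVec_mul_exp hLMI hdiff ht.1).trans (by simpa using h0)
  have hsη := abs_dotProduct_le_of_dotProduct_mulVec_mul_exp_le hz hdom (hs t ht)
  have hξη := abs_dotProduct_le_of_dotProduct_mulVec_mul_exp_le hz hdom hnominal
  have hsplit : a ⬝ᵥ (s t - ξ t) = a ⬝ᵥ (s t - η t) - a ⬝ᵥ (ξ t - η t) := by
    rw [← dotProduct_sub, sub_sub_sub_cancel_right]
  refine abs_le.1 ((hsplit ▸ abs_sub _ _).trans ?_)
  rw [add_mul, add_div]
  exact add_le_add hsη hξη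

/-- Triangle-type bound: if η starts in the r-ellipsoid around ξ(0) and a realization s stays
within the bisimulation bound γ of η on [0, T], then
|aᵀ(s(t) − ξ(t))| ≤ (√γ + √r) e^{−μt/2} / z on [0, T]. -/
theorem stmt_8 {n p : ℕ} (A : Matrix (Fin n) (Fin n) ℝ) (B : Matrix (Fin n) (Fin p) ℝ)
    (u : ℝ → Fin p → ℝ) (ξ η : ℝ → Fin n → ℝ)
    (hξ : ∀ t : ℝ, HasDerivAt ξ (A.mulVec (ξ t) + B.mulVec (u t)) t)
    (hη : ∀ t : ℝ, HasDerivAt η (A.mulVec (η t) + B.mulVec (u t)) t)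
    (M : Matrix (Fin n) (Fin n) ℝ) (hMsym : M = Mᵀ)
    (hMpd : ∀ v : Fin n → ℝ, v ≠ 0 → 0 < v ⬝ᵥ M.mulVec v) (μ : ℝ)
    (hLMI : ∀ v : Fin n → ℝ, v ⬝ᵥ (Aᵀ * M + M * A + μ • M).mulVec v ≤ 0)
    (r : ℝ) (hr : 0 ≤ r)
    (h0 : (ξ 0 - η 0) ⬝ᵥ M.mulVec (ξ 0 - η 0) ≤ r)
    (a : Fin n → ℝ) (z : ℝ) (hz : 0 < z)
    (hdom : ∀ v : Fin n → ℝ, 0 ≤ v ⬝ᵥ (M - z ^ 2 • vecMulVec a a).mulVec v)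
    (T : ℝ) (hT : 0 < T) (γ : ℝ) (hγ : 0 ≤ γ)
    (s : ℝ → Fin n → ℝ)
    (hs : ∀ t ∈ Set.Icc (0 : ℝ) T,
      ((s t - η t) ⬝ᵥ M.mulVec (s t - η t)) * Real.exp (μ * t) ≤ γ) :
    ∀ t ∈ Set.Icc (0 : ℝ) T,
      -((Real.sqrt γ + Real.sqrt r) * Real.exp (-μ * t / 2) / z) ≤ a ⬝ᵥ (s t - ξ t) ∧
        a ⬝ᵥ (s t - ξ t) ≤ (Real.sqrt γ + Real.sqrt r) * Real.exp (-μ * t / 2) / z :=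
  stmt_8_general A B u ξ η hξ hη M μ hLMI r h0 a z hz hdom T γ s hs
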